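/- Let C be a ribbon category, t a family of linear maps t_P : End_C(P) → k indexed by objects P of a tensor ideal P, satisfying cyclicity and the left partial trace property: t_{X⊗P}(f) = t_P(tr_L(f)) for all X ∈ C, P ∈ P, f ∈ End(X⊗P). Then t also satisfies the right partial trace property: t_{P⊗X}(f) = t_P(tr_R(f)) for all f ∈ End(P⊗X), where tr_R(f) = (id_P ⊗ ev^R_X) ∘ (f ⊗ id_{X^∨}) ∘ (id_P ⊗ coev_X). -/

import Mathlib

open CategoryTheory MonoidalCategory

universe v u

variable {k : Type*} [Field k] {C : Type u} [Category.{v} C] [MonoidalCategory C]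
  [BraidedCategory C] [RightRigidCategory C] [Preadditive C] [Linear k C]

/-- The right evaluation induced by the ribbon (braiding + twist) pivotal structure:
`ev^R_X = ev_X ∘ c_{X,X^∨} ∘ (θ_X ⊗ id) : X ⊗ X^∨ ⟶ 1`. -/
def evR (tw : ∀ X : C, X ⟶ X) (X : C) : X ⊗ Xᘁ ⟶ 𝟙_ C :=
  (tw X ▷ Xᘁ) ≫ (β_ X (Xᘁ)).hom ≫ ε_ X (Xᘁ)

/-- The right coevaluation induced by the ribbon pivotal structure:
`coev^R_X = (id ⊗ θ_X) ∘ c_{X,X^∨} ∘ coev_X : 1 ⟶ X^∨ ⊗ X`. -/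
def coevR (tw : ∀ X : C, X ⟶ X) (X : C) : 𝟙_ C ⟶ Xᘁ ⊗ X :=
  η_ X (Xᘁ) ≫ (β_ X (Xᘁ)).hom ≫ (Xᘁ ◁ tw X)

/-- The left partial trace: for `f ∈ End(X ⊗ P)`,
`tr_L(f) = (ev_X ⊗ id) ∘ (id_{X^∨} ⊗ f) ∘ (coev^R_X ⊗ id) ∈ End(P)`. -/
def trL (tw : ∀ X : C, X ⟶ X) (X P : C) (f : X ⊗ P ⟶ X ⊗ P) : P ⟶ P :=
  (λ_ P).inv ≫ (coevR tw X ▷ P) ≫ (α_ (Xᘁ) X P).hom ≫ (Xᘁ ◁ f) ≫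
    (α_ (Xᘁ) X P).inv ≫ (ε_ X (Xᘁ) ▷ P) ≫ (λ_ P).hom

/-- The right partial trace: for `f ∈ End(P ⊗ X)`,
`tr_R(f) = (id ⊗ ev^R_X) ∘ (f ⊗ id_{X^∨}) ∘ (id ⊗ coev_X) ∈ End(P)`. -/
def trR (tw : ∀ X : C, X ⟶ X) (P X : C) (f : P ⊗ X ⟶ P ⊗ X) : P ⟶ P :=
  (ρ_ P).inv ≫ (P ◁ η_ X (Xᘁ)) ≫ (α_ P X (Xᘁ)).inv ≫ (f ▷ Xᘁ) ≫
    (α_ P X (Xᘁ)).hom ≫ (P ◁ evR tw X) ≫ (ρ_ P).hom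

open BraidedCategory in
set_option linter.unusedSectionVars false in
theorem headlem (P X Y : C) (g : X ⟶ X) (u : 𝟙_ C ⟶ X ⊗ Y) :
    (λ_ P).inv ≫ (u ▷ P) ≫ ((β_ X Y).hom ▷ P) ≫ ((Y ◁ g) ▷ P) ≫ (α_ Y X P).hom ≫
      (Y ◁ (β_ X P).hom) ≫ (β_ Y (P ⊗ X)).hom
    = (ρ_ P).inv ≫ (P ◁ u) ≫ (P ◁ (β_ X Y).hom) ≫ (P ◁ (Y ◁ g)) ≫
      (P ◁ (β_ Y X).hom) ≫ (α_ P X Y).inv := by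
  have hA : (α_ Y X P).hom ≫ (Y ◁ (β_ X P).hom) ≫ (β_ Y (P ⊗ X)).hom
      = (β_ (Y ⊗ X) P).hom ≫ (P ◁ (β_ Y X).hom) ≫ (α_ P X Y).inv := by simp
  have h1 : ((u ≫ (β_ X Y).hom ≫ (Y ◁ g)) ▷ P) ≫ (β_ (Y ⊗ X) P).hom
      = (β_ (𝟙_ C) P).hom ≫ (P ◁ (u ≫ (β_ X Y).hom ≫ (Y ◁ g))) :=
    braiding_naturality_left _ P
  simp only [comp_whiskerRight, MonoidalCategory.whiskerLeft_comp, Category.assoc] at h1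
  slice_lhs 5 7 => rw [hA]
  slice_lhs 2 5 => rw [h1]
  rw [braiding_tensorUnit_left]
  simp

open BraidedCategory in
set_option linter.unusedSectionVars false in
theorem keylem
    (tw : ∀ X : C, X ⟶ X)
    (tw_nat : ∀ {X Y : C} (f : X ⟶ Y), tw X ≫ f = f ≫ tw Y)
    (tw_iso : ∀ X : C, IsIso (tw X))
    (tw_tensor : ∀ X Y : C, tw (X ⊗ Y) = (β_ X Y).hom ≫ (β_ Y X).hom ≫ (tw X ⊗ₘ tw Y))
    (tw_unit : tw (𝟙_ C) = 𝟙 (𝟙_ C))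
    (P X : C) (f : P ⊗ X ⟶ P ⊗ X) :
    trL tw X P ((β_ X P).hom ≫ f ≫ (β_ X P).inv) = trR tw P X f := by
  haveI := tw_iso (Xᘁ)
  -- derived facts
  have fact1 : η_ X (Xᘁ) ≫ tw (X ⊗ Xᘁ) = η_ X (Xᘁ) := by
    rw [← tw_nat (η_ X (Xᘁ)), tw_unit, Category.id_comp]
  have fact2 : tw (Xᘁ ⊗ X) ≫ ε_ X (Xᘁ) = ε_ X (Xᘁ) := by
    rw [tw_nat (ε_ X (Xᘁ)), tw_unit, Category.comp_id]
  -- twist-evaluation lemma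
  have star : (tw X ⊗ₘ tw (Xᘁ)) ≫ (β_ X (Xᘁ)).hom ≫ ε_ X (Xᘁ)
      = (β_ (Xᘁ) X).inv ≫ ε_ X (Xᘁ) := by
    rw [tw_tensor] at fact2
    have h2 : (tw (Xᘁ) ⊗ₘ tw X) ≫ ε_ X (Xᘁ)
        = (β_ X (Xᘁ)).inv ≫ (β_ (Xᘁ) X).inv ≫ ε_ X (Xᘁ) := by
      conv_rhs => rw [← fact2]
      simp
    rw [braiding_naturality_assoc, h2, Iso.hom_inv_id_assoc]
  have starfinal : (X ◁ inv (tw (Xᘁ))) ≫ (β_ (Xᘁ) X).inv ≫ ε_ X (Xᘁ)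
      = (tw X ▷ Xᘁ) ≫ (β_ X (Xᘁ)).hom ≫ ε_ X (Xᘁ) := by
    rw [← cancel_epi (X ◁ tw (Xᘁ)), ← MonoidalCategory.whiskerLeft_comp_assoc,
      IsIso.hom_inv_id, MonoidalCategory.whiskerLeft_id, Category.id_comp,
      ← tensorHom_def'_assoc, star]
  -- the double-braiding reduction
  have hD : η_ X (Xᘁ) ≫ (β_ X (Xᘁ)).hom ≫ (Xᘁ ◁ tw X) ≫ (β_ (Xᘁ) X).hom
      = η_ X (Xᘁ) ≫ (X ◁ inv (tw (Xᘁ))) := by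
    have : (β_ X (Xᘁ)).hom ≫ (Xᘁ ◁ tw X) ≫ (β_ (Xᘁ) X).hom
        = tw (X ⊗ Xᘁ) ≫ (X ◁ inv (tw (Xᘁ))) := by
      rw [braiding_naturality_right, tw_tensor, MonoidalCategory.tensorHom_def]
      simp [MonoidalCategory.whiskerLeft_comp]
    rw [this, ← Category.assoc, fact1]
  -- C1 : slide the inverse braiding through the evaluation
  have C1 : (Xᘁ ◁ (β_ X P).inv) ≫ (α_ (Xᘁ) X P).inv ≫ (ε_ X (Xᘁ) ▷ P) ≫ (λ_ P).hom
      = (α_ (Xᘁ) P X).inv ≫ ((β_ (Xᘁ) P).hom ▷ X) ≫ (α_ P (Xᘁ) X).hom ≫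
        (P ◁ ε_ X (Xᘁ)) ≫ (ρ_ P).hom := by
    rw [← braiding_rightUnitor P, ← Category.assoc (ε_ X (Xᘁ) ▷ P), braiding_naturality_left]
    simp
  -- A-lemma
  have Alem : (α_ (Xᘁ) P X).inv ≫ ((β_ (Xᘁ) P).hom ▷ X) ≫ (α_ P (Xᘁ) X).hom
      = (β_ (Xᘁ) (P ⊗ X)).hom ≫ (α_ P X (Xᘁ)).hom ≫ (P ◁ (β_ (Xᘁ) X).inv) := by
    simp
  have h3 : (Xᘁ ◁ f) ≫ (β_ (Xᘁ) (P ⊗ X)).hom = (β_ (Xᘁ) (P ⊗ X)).hom ≫ (f ▷ Xᘁ) :=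
    braiding_naturality_right _ f
  -- main computation
  simp only [trL, trR, coevR, evR, comp_whiskerRight, MonoidalCategory.whiskerLeft_comp,
    Category.assoc]
  slice_lhs 8 11 => rw [C1]
  slice_lhs 8 10 => rw [Alem]
  slice_lhs 7 8 => rw [h3]
  slice_lhs 1 7 => rw [headlem P X (Xᘁ) (tw X) (η_ X (Xᘁ))]
  slice_lhs 2 5 => rw [← MonoidalCategory.whiskerLeft_comp, ← MonoidalCategory.whiskerLeft_comp,
    ← MonoidalCategory.whiskerLeft_comp, hD, MonoidalCategory.whiskerLeft_comp]
  -- commute (P ◁ X ◁ inv tw) past α⁻¹ and f ▷ Xᘁ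
  have h4 : (P ◁ (X ◁ inv (tw (Xᘁ)))) ≫ (α_ P X (Xᘁ)).inv ≫ (f ▷ Xᘁ)
      = (α_ P X (Xᘁ)).inv ≫ (f ▷ Xᘁ) ≫ ((P ⊗ X) ◁ inv (tw (Xᘁ))) := by
    rw [associator_inv_naturality_right_assoc, whisker_exchange]
  slice_lhs 3 5 => rw [h4]
  have h5 : ((P ⊗ X) ◁ inv (tw (Xᘁ))) ≫ (α_ P X (Xᘁ)).hom
      = (α_ P X (Xᘁ)).hom ≫ (P ◁ (X ◁ inv (tw (Xᘁ)))) := by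
    rw [associator_naturality_right]
  slice_lhs 5 6 => rw [h5]
  slice_lhs 6 8 => rw [← MonoidalCategory.whiskerLeft_comp, ← MonoidalCategory.whiskerLeft_comp,
    starfinal, MonoidalCategory.whiskerLeft_comp, MonoidalCategory.whiskerLeft_comp]
  simp

/-- Let `C` be a ribbon category (braided rigid monoidal with compatible
twist `tw`), `I` a tensor ideal, and `t` a family of linear maps
`t_P : End_C(P) → k` for `P ∈ I` satisfying cyclicity and the left partial trace
property `t_{X⊗P}(f) = t_P(tr_L(f))`.  Then `t` also satisfies the right partial trace
property: `t_{P⊗X}(f) = t_P(tr_R(f))` for all `f ∈ End(P ⊗ X)`. -/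
theorem stmt17
    (tw : ∀ X : C, X ⟶ X)
    (tw_nat : ∀ {X Y : C} (f : X ⟶ Y), tw X ≫ f = f ≫ tw Y)
    (tw_iso : ∀ X : C, IsIso (tw X))
    (tw_tensor : ∀ X Y : C, tw (X ⊗ Y) = (β_ X Y).hom ≫ (β_ Y X).hom ≫ (tw X ⊗ₘ tw Y))
    (tw_unit : tw (𝟙_ C) = 𝟙 (𝟙_ C))
    (tw_dual : ∀ X : C, tw Xᘁ = (tw X)ᘁ)
    -- `I` is a tensor ideal:
    (I : C → Prop)
    (hIl : ∀ (X P : C), I P → I (X ⊗ P))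
    (hIr : ∀ (P X : C), I P → I (P ⊗ X))
    (hretract : ∀ (P Q : C) (i : Q ⟶ P) (r : P ⟶ Q), i ≫ r = 𝟙 Q → I P → I Q)
    -- the trace family and its properties:
    (t : ∀ P : C, I P → ((P ⟶ P) →ₗ[k] k))
    (hcyc : ∀ (P Q : C) (hP : I P) (hQ : I Q) (f : P ⟶ Q) (g : Q ⟶ P),
      t P hP (f ≫ g) = t Q hQ (g ≫ f))
    (hleft : ∀ (X P : C) (hP : I P) (f : X ⊗ P ⟶ X ⊗ P),
      t (X ⊗ P) (hIl X P hP) f = t P hP (trL tw X P f)) :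
    ∀ (P X : C) (hP : I P) (f : P ⊗ X ⟶ P ⊗ X),
      t (P ⊗ X) (hIr P X hP) f = t P hP (trR tw P X f) := by
  intro P X hP f
  have h := hcyc (X ⊗ P) (P ⊗ X) (hIl X P hP) (hIr P X hP) ((β_ X P).hom ≫ f) ((β_ X P).inv)
  simp only [Category.assoc, Iso.inv_hom_id_assoc, Iso.hom_inv_id, Category.comp_id] at h
  rw [← h, hleft, keylem tw @tw_nat tw_iso tw_tensor tw_unit]
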